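/- Let F be a finite field and let f, g : LaurentSeries F be irrational, i.e. neither f nor g lies in the range of algebraMap (RatFunc F) (LaurentSeries F). Suppose that Tendsto (fun m => (p(f, m) : ℝ) / (p(g, m) : ℝ)) atTop atTop. Then f and g are linearly independent over F(T): for all A, B, C : RatFunc F, if (algebraMap A) * f + (algebraMap B) * g + algebraMap C = 0 in LaurentSeries F, then A = 0, B = 0 and C = 0. -/

import Mathlib

open Filter

attribute [local instance] RatFunc.liftAlgebra

/-- The subword complexity of a sequence `a : ℕ → A`: the number of distinct
factors of length `m` occurring in `a`. -/
noncomputable def subwordComplexity {A : Type*} (a : ℕ → A) (m : ℕ) : ℕ :=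
  Set.ncard { w : Fin m → A | ∃ j : ℕ, ∀ i : Fin m, w i = a (j + i) }

/-- The complexity of a Laurent series `f ∈ F((T⁻¹))`: the subword complexity of its
coefficient sequence. -/
noncomputable def laurentComplexity {F : Type*} [Field F] (f : LaurentSeries F) (m : ℕ) : ℕ :=
  subwordComplexity (fun n : ℕ => f.coeff (n : ℤ)) m

/-!
If `A ≠ 0`, clearing denominators gives polynomials in `X = T⁻¹` with `Q f = P g + U` and
`Q ≠ 0`. Beyond `deg U` the coefficients of `f` then satisfy a linear recurrence of order
`s = deg Q - ord_X Q` driven by the coefficients of `g`, so a factor of length `m` of `f` at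
a position `j` is determined by the `s` coefficients of `f` before `j` and by a factor of
length `m + deg P` of `g`. Hence `p(f, m) ≤ N + |F| ^ (s + deg P) * p(g, m) ≤ K * p(g, m)`,
which contradicts `p(f, m) / p(g, m) → ∞`. So `A = 0`; then `B = 0` since `g` is
irrational, and finally `C = 0`.
-/

open Polynomial

theorem Set.ncard_image_le_ncard_image_of_factors {ι α β : Type*} [Nonempty ι] {S : Set ι}
    (h : ι → α) (e : ι → β) (he : ∀ j ∈ S, ∀ j' ∈ S, e j = e j' → h j = h j')
    (hfin : (e '' S).Finite := by toFinite_tac) :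
    (h '' S).ncard ≤ (e '' S).ncard := by
  refine Set.ncard_le_ncard_of_injOn (fun w => e (Function.invFunOn h S w)) ?_ ?_ hfin
  · rintro _ ⟨j, hj, rfl⟩
    exact Set.mem_image_of_mem e (Function.invFunOn_mem ⟨j, hj, rfl⟩)
  · rintro _ ⟨j, hj, rfl⟩ _ ⟨j', hj', rfl⟩ hjj'
    rw [← Function.invFunOn_eq (f := h) ⟨j, hj, rfl⟩,
      ← Function.invFunOn_eq (f := h) ⟨j', hj', rfl⟩]
    exact he _ (Function.invFunOn_mem ⟨j, hj, rfl⟩) _ (Function.invFunOn_mem ⟨j', hj', rfl⟩) hjj'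

section Factors

variable {A : Type*}

def factorAt (a : ℕ → A) (m j : ℕ) : Fin m → A := fun i => a (j + i)

theorem subwordComplexity_eq_ncard_range (a : ℕ → A) (m : ℕ) :
    subwordComplexity a m = (Set.range (factorAt a m)).ncard := by
  rw [subwordComplexity]
  congr 1
  ext w
  exact ⟨fun ⟨j, hj⟩ => ⟨j, funext fun i => (hj i).symm⟩, fun ⟨j, hj⟩ => ⟨j, fun i => hj ▸ rfl⟩⟩

theorem subwordComplexity_pos [Finite A] (a : ℕ → A) (m : ℕ) : 0 < subwordComplexity a m := by
  rw [subwordComplexity_eq_ncard_range]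
  exact (Set.ncard_pos (Set.toFinite _)).2 (Set.range_nonempty _)

theorem subwordComplexity_le_of_factorAt_determined {B E : Type*} [Finite B] [Finite E]
    (a : ℕ → A) (b : ℕ → B) {m m' : ℕ} (N : ℕ) (σ : ℕ → ℕ) (data : ℕ → E)
    (h : ∀ j j', N ≤ j → N ≤ j' → factorAt b m' (σ j) = factorAt b m' (σ j') →
      data j = data j' → factorAt a m j = factorAt a m j') :
    subwordComplexity a m ≤ N + Nat.card E * subwordComplexity b m' := by
  have hsplit : Set.range (factorAt a m) =
      factorAt a m '' Set.Iio N ∪ factorAt a m '' Set.Ici N := by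
    rw [← Set.image_union, Set.Iio_union_Ici, Set.image_univ]
  have hhead : (factorAt a m '' Set.Iio N).ncard ≤ N :=
    (Set.ncard_image_le (Set.finite_Iio N)).trans (Set.ncard_Iio_nat N).le
  have htail : (factorAt a m '' Set.Ici N).ncard ≤ Nat.card E * subwordComplexity b m' := calc
    _ ≤ ((fun j => (factorAt b m' (σ j), data j)) '' Set.Ici N).ncard :=
      Set.ncard_image_le_ncard_image_of_factors _ _
        fun j hj j' hj' hjj' => h j j' hj hj' (Prod.ext_iff.1 hjj').1 (Prod.ext_iff.1 hjj').2
    _ ≤ (Set.range (factorAt b m') ×ˢ (Set.univ : Set E)).ncard :=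
      Set.ncard_le_ncard (by rintro _ ⟨j, -, rfl⟩; exact ⟨⟨σ j, rfl⟩, trivial⟩)
    _ = Nat.card E * subwordComplexity b m' := by
      rw [Set.ncard_prod, Set.ncard_univ, subwordComplexity_eq_ncard_range, mul_comm]
  rw [subwordComplexity_eq_ncard_range, hsplit]
  exact (Set.ncard_union_le _ _).trans (add_le_add hhead htail)

theorem subwordComplexity_add_le [Finite A] (a : ℕ → A) (m d : ℕ) :
    subwordComplexity a (m + d) ≤ Nat.card A ^ d * subwordComplexity a m := by
  have := subwordComplexity_le_of_factorAt_determined a a (m := m + d) (m' := m) 0 id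
    (fun j (i : Fin d) => a (j + m + i)) fun j j' _ _ hw hd => funext <| Fin.addCases
      (fun i => by simpa [factorAt] using congrFun hw i)
      (fun i => by simpa [factorAt, add_assoc] using congrFun hd i)
  simpa [Nat.card_fun] using this

end Factors

theorem eq_of_recurrence {α β : Type*} {s m : ℕ} (R : β → (Fin s → α) → α) {x y : ℤ → α}
    {u v : ℤ → β} (hx : ∀ t : ℕ, t < m → x t = R (u t) fun k => x (t - 1 - k))
    (hy : ∀ t : ℕ, t < m → y t = R (v t) fun k => y (t - 1 - k))
    (hinit : ∀ k : Fin s, x (-1 - k) = y (-1 - k)) (hinput : ∀ t : ℕ, t < m → u t = v t) :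
    ∀ t : ℕ, t < m → x t = y t := by
  intro t
  induction t using Nat.strong_induction_on with
  | _ t ih =>
    intro ht
    rw [hx t ht, hy t ht, hinput t ht]
    congr 1
    funext k
    rcases lt_or_ge (k : ℕ) t with hk | hk
    · have := ih (t - 1 - k) (by omega) (by omega)
      rwa [Nat.cast_sub (by omega), Nat.cast_sub (by omega), Nat.cast_one] at this
    · have := hinit ⟨k - t, by omega⟩
      rwa [show -1 - ((k - t : ℕ) : ℤ) = t - 1 - k by omega] at this

namespace LaurentSeries

section Coefficients

variable {R : Type*} [CommSemiring R]

theorem coeff_algebraMap_polynomial (q : R[X]) (n : ℤ) :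
    (algebraMap R[X] (LaurentSeries R) q).coeff n = if n < 0 then 0 else q.coeff n.natAbs := by
  rw [Polynomial.algebraMap_hahnSeries_apply, PowerSeries.coeff_coe, Polynomial.coeff_coe]

theorem algebraMap_monomial (i : ℕ) (c : R) :
    algebraMap R[X] (LaurentSeries R) (monomial i c) = HahnSeries.single (i : ℤ) c := by
  ext n
  rw [coeff_algebraMap_polynomial, HahnSeries.coeff_single, coeff_monomial]
  split_ifs <;> first | rfl | omega

theorem coeff_algebraMap_mul (q : R[X]) (x : LaurentSeries R) (n : ℤ) {N : ℕ}
    (hN : q.natDegree < N) :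
    (algebraMap R[X] (LaurentSeries R) q * x).coeff n =
      ∑ i ∈ Finset.range N, q.coeff i * x.coeff (n - i) := by
  conv_lhs => rw [q.as_sum_range' N hN]
  simp only [map_sum, Finset.sum_mul, HahnSeries.coeff_sum, algebraMap_monomial,
    HahnSeries.coeff_single_mul]

theorem coeff_algebraMap_of_natDegree_lt (q : R[X]) {n : ℤ} (hn : q.natDegree < n) :
    (algebraMap R[X] (LaurentSeries R) q).coeff n = 0 := by
  rw [coeff_algebraMap_polynomial, if_neg (by omega)]
  exact q.coeff_eq_zero_of_natDegree_lt (by omega)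

end Coefficients

section Recurrence

variable {F : Type*} [Field F] {f g : LaurentSeries F} {Q P U : F[X]}

theorem coeff_eq_of_polynomial_relation (hQ : Q ≠ 0)
    (hrel : algebraMap F[X] _ Q * f = algebraMap F[X] _ P * g + algebraMap F[X] _ U) {n : ℤ}
    (hn : (U.natDegree : ℤ) < n + Q.natTrailingDegree) :
    f.coeff n = (Q.coeff Q.natTrailingDegree)⁻¹ *
      (∑ i : Fin (P.natDegree + 1), P.coeff i * g.coeff (n + Q.natTrailingDegree - i) -
        ∑ k : Fin (Q.natDegree - Q.natTrailingDegree),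
          Q.coeff (Q.natTrailingDegree + (k + 1)) * f.coeff (n - 1 - k)) := by
  set e := Q.natTrailingDegree
  have h := congrArg (HahnSeries.coeff · (n + e)) hrel
  simp only [HahnSeries.coeff_add] at h
  rw [coeff_algebraMap_mul Q f _ (N := e + (Q.natDegree - e + 1)) (by omega),
    coeff_algebraMap_mul P g _ P.natDegree.lt_succ_self, coeff_algebraMap_of_natDegree_lt U hn,
    add_zero, Finset.sum_range_add, Finset.sum_range_succ',
    Finset.sum_eq_zero fun i hi => by
      rw [coeff_eq_zero_of_lt_natTrailingDegree (Finset.mem_range.1 hi), zero_mul],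
    ← Fin.sum_univ_eq_sum_range (fun i => P.coeff i * g.coeff (n + e - i)),
    ← Fin.sum_univ_eq_sum_range] at h
  have hidx (i : ℕ) : n + e - ((e + (i + 1) : ℕ) : ℤ) = n - 1 - i := by push_cast; ring
  simp only [hidx, zero_add, add_zero, add_sub_cancel_right] at h
  rw [eq_inv_mul_iff_mul_eq₀ (coeff_natTrailingDegree_ne_zero.2 hQ), ← h]
  ring

theorem coeff_add_eq_of_polynomial_relation (hQ : Q ≠ 0)
    (hrel : algebraMap F[X] _ Q * f = algebraMap F[X] _ P * g + algebraMap F[X] _ U) {m : ℕ}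
    {j j' : ℤ} (hj : (U.natDegree : ℤ) < j + Q.natTrailingDegree)
    (hj' : (U.natDegree : ℤ) < j' + Q.natTrailingDegree)
    (hinit : ∀ k : Fin (Q.natDegree - Q.natTrailingDegree),
      f.coeff (j - 1 - k) = f.coeff (j' - 1 - k))
    (hg : ∀ i : ℕ, i < m + P.natDegree → g.coeff (j + Q.natTrailingDegree - P.natDegree + i) =
      g.coeff (j' + Q.natTrailingDegree - P.natDegree + i)) :
    ∀ t : ℕ, t < m → f.coeff (j + t) = f.coeff (j' + t) := by
  set e := Q.natTrailingDegree
  refine eq_of_recurrence (x := fun t => f.coeff (j + t)) (y := fun t => f.coeff (j' + t))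
    (u := fun t (i : Fin (P.natDegree + 1)) => g.coeff (j + t + e - i))
    (v := fun t (i : Fin (P.natDegree + 1)) => g.coeff (j' + t + e - i))
    (fun (b : Fin (P.natDegree + 1) → F) (w : Fin (Q.natDegree - e) → F) =>
      (Q.coeff e)⁻¹ * (∑ i : Fin _, P.coeff i * b i - ∑ k : Fin _, Q.coeff (e + (k + 1)) * w k))
    ?hx ?hy ?hinit ?hinput
  case hx | hy =>
    intro t _
    simp only [← add_sub_assoc]
    exact coeff_eq_of_polynomial_relation hQ hrel (by omega)
  case hinit =>
    intro k
    convert hinit k using 2 <;> ring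
  case hinput =>
    intro t ht
    funext i
    have hi : (i : ℕ) ≤ t + P.natDegree := by omega
    convert hg (t + P.natDegree - i) (by omega) using 2 <;> push_cast [Nat.cast_sub hi] <;> ring

theorem exists_laurentComplexity_le_mul [Finite F] (hQ : Q ≠ 0)
    (hrel : algebraMap F[X] _ Q * f = algebraMap F[X] _ P * g + algebraMap F[X] _ U) :
    ∃ K, ∀ m, laurentComplexity f m ≤ K * laurentComplexity g m := by
  set e := Q.natTrailingDegree
  set s := Q.natDegree - e
  set d := P.natDegree
  -- `N > d` keeps the subtraction `j + e - d` in `ℕ` honest, and `N > deg U` puts every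
  -- position `j ≥ N` in the range of the recurrence.
  set N := d + U.natDegree + 1
  refine ⟨N + Nat.card F ^ s * Nat.card F ^ d, fun m => ?_⟩
  have hdet : ∀ j j', N ≤ j → N ≤ j' →
      factorAt (fun n : ℕ => g.coeff n) (m + d) (j + e - d) =
        factorAt (fun n : ℕ => g.coeff n) (m + d) (j' + e - d) →
      (fun k : Fin s => f.coeff (j - 1 - k)) = (fun k : Fin s => f.coeff (j' - 1 - k)) →
      factorAt (fun n : ℕ => f.coeff n) m j = factorAt (fun n : ℕ => f.coeff n) m j' := by
    intro j j' hj hj' hg hinit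
    funext t
    have hg' (i : ℕ) (hi : i < m + d) : g.coeff (j + e - d + i) = g.coeff (j' + e - d + i) := by
      have hd : d ≤ j + e ∧ d ≤ j' + e := by omega
      simpa [factorAt, Nat.cast_sub hd.1, Nat.cast_sub hd.2] using congrFun hg ⟨i, hi⟩
    simpa [factorAt] using coeff_add_eq_of_polynomial_relation hQ hrel (by omega) (by omega)
      (congrFun hinit) hg' t t.2
  have hg_pos := subwordComplexity_pos (fun n : ℕ => g.coeff n) m
  calc laurentComplexity f m ≤ N + Nat.card F ^ s * laurentComplexity g (m + d) := by
        simpa [laurentComplexity, Nat.card_fun] using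
          subwordComplexity_le_of_factorAt_determined _ _ N (fun j => j + e - d) _ hdet
    _ ≤ N + Nat.card F ^ s * (Nat.card F ^ d * laurentComplexity g m) := by
        gcongr
        exact subwordComplexity_add_le _ m d
    _ ≤ _ := by
        rw [add_mul, mul_assoc]
        exact Nat.add_le_add_right (Nat.le_mul_of_pos_right N hg_pos) _

end Recurrence

section ClearDenominators

variable {F : Type*} [Field F]

theorem algebraMap_mul_algebraMap_denom (x : RatFunc F) :
    algebraMap (RatFunc F) (LaurentSeries F) x * algebraMap F[X] _ x.denom =
      algebraMap F[X] _ x.num := by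
  have hx : x * algebraMap F[X] (RatFunc F) x.denom = algebraMap F[X] _ x.num := by
    nth_rw 1 [← RatFunc.num_div_denom x]
    exact div_mul_cancel₀ _ (RatFunc.algebraMap_ne_zero x.denom_ne_zero)
  simpa only [map_mul, ← IsScalarTower.algebraMap_apply] using
    congrArg (algebraMap (RatFunc F) (LaurentSeries F)) hx

theorem exists_polynomial_relation {f g : LaurentSeries F} {A B C : RatFunc F} (hA : A ≠ 0)
    (h : algebraMap (RatFunc F) (LaurentSeries F) A * f +
      algebraMap (RatFunc F) (LaurentSeries F) B * g +
        algebraMap (RatFunc F) (LaurentSeries F) C = 0) :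
    ∃ Q P U : F[X], Q ≠ 0 ∧
      algebraMap F[X] _ Q * f = algebraMap F[X] _ P * g + algebraMap F[X] _ U := by
  refine ⟨A.num * B.denom * C.denom, -(B.num * A.denom * C.denom), -(C.num * A.denom * B.denom),
    mul_ne_zero (mul_ne_zero (RatFunc.num_ne_zero hA) B.denom_ne_zero) C.denom_ne_zero, ?_⟩
  simp only [map_mul, map_neg, ← algebraMap_mul_algebraMap_denom]
  linear_combination (algebraMap F[X] (LaurentSeries F) A.denom *
    algebraMap F[X] (LaurentSeries F) B.denom * algebraMap F[X] (LaurentSeries F) C.denom) * h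

end ClearDenominators

end LaurentSeries

theorem linear_independence_of_complexity_ratio_general
    (F : Type*) [Field F] [Fintype F] (f g : LaurentSeries F)
    (hg : g ∉ Set.range (algebraMap (RatFunc F) (LaurentSeries F)))
    (hratio : Tendsto
      (fun m : ℕ => (laurentComplexity f m : ℝ) / (laurentComplexity g m : ℝ))
      atTop atTop) :
    ∀ A B C : RatFunc F,
      (algebraMap (RatFunc F) (LaurentSeries F) A) * f +
        (algebraMap (RatFunc F) (LaurentSeries F) B) * g +
        (algebraMap (RatFunc F) (LaurentSeries F) C) = 0 →
      A = 0 ∧ B = 0 ∧ C = 0 := by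
  intro A B C h
  obtain rfl : A = 0 := by
    by_contra hA
    obtain ⟨Q, P, U, hQ, hrel⟩ := LaurentSeries.exists_polynomial_relation hA h
    obtain ⟨K, hK⟩ := LaurentSeries.exists_laurentComplexity_le_mul hQ hrel
    obtain ⟨m, hm⟩ := (hratio.eventually_gt_atTop K).exists
    exact hm.not_ge (div_le_of_le_mul₀ (by positivity) (by positivity) (by exact_mod_cast hK m))
  rw [map_zero, zero_mul, zero_add] at h
  obtain rfl : B = 0 := by
    by_contra hB
    refine hg ⟨-C / B, ?_⟩
    rw [map_div₀, map_neg, div_eq_iff ((_root_.map_ne_zero _).2 hB)]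
    linear_combination -h
  rw [map_zero, zero_mul, zero_add, map_eq_zero] at h
  exact ⟨rfl, rfl, h⟩

/-- A criterion of linear independence over `F(T)`: two irrational Laurent series
whose complexity functions have ratio tending to infinity are linearly
independent over `F(T)`. -/
theorem linear_independence_of_complexity_ratio
    (F : Type*) [Field F] [Fintype F] (f g : LaurentSeries F)
    (hf : f ∉ Set.range (algebraMap (RatFunc F) (LaurentSeries F)))
    (hg : g ∉ Set.range (algebraMap (RatFunc F) (LaurentSeries F)))
    (hratio : Tendsto
      (fun m : ℕ => (laurentComplexity f m : ℝ) / (laurentComplexity g m : ℝ))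
      atTop atTop) :
    ∀ A B C : RatFunc F,
      (algebraMap (RatFunc F) (LaurentSeries F) A) * f +
        (algebraMap (RatFunc F) (LaurentSeries F) B) * g +
        (algebraMap (RatFunc F) (LaurentSeries F) C) = 0 →
      A = 0 ∧ B = 0 ∧ C = 0 :=
  linear_independence_of_complexity_ratio_general F f g hg hratio
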